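/- arXiv:2508.13384 — 3 statements merged into one kernel-verified Lean document; each statement's English description precedes it below -/
import Mathlib

section
/- Suppose $\mathscr{A} \subseteq \mathbb{N}$ satisfies $I_p(N;\mathscr{A}) \ll N^{p-1}$ for some $p \in (1,2)$. Let $\mathscr{B} \subseteq \mathscr{A}$ and $\mathscr{C} \subseteq \mathbb{N} \setminus \mathscr{A}$ be sets whose counting functions satisfy $B(N) + C(N) \ll N^{2 - 2/p}$. Then the perturbed set $\mathscr{A}' = (\mathscr{A} \setminus \mathscr{B}) \cup \mathscr{C}$ also satisfies $I_p(N;\mathscr{A}') \ll N^{p-1}$ for all large $N$. -/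
open Complex Finset MeasureTheory
open scoped Real Classical

/-- `e x = exp(2πix)` -/
noncomputable def e (x : ℝ) : ℂ := Complex.exp (2 * Real.pi * Complex.I * x)

/-- The elements of `A` in `[1, N]`, as a finset. -/
noncomputable def AN (A : Set ℕ) (N : ℝ) : Finset ℕ :=
  (Finset.Icc 1 ⌊N⌋₊).filter (· ∈ A)

/-- The mean value `I_p(N; A)`. -/
noncomputable def Ip (p : ℝ) (A : Set ℕ) (N : ℝ) : ℝ :=
  ∫ α in (0:ℝ)..(1:ℝ), ‖∑ n ∈ AN A N, e (n * α)‖ ^ p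


lemma cont_e (n : ℕ) : Continuous fun α : ℝ => e ((n : ℝ) * α) := by
  unfold e; fun_prop

lemma norm_e (x : ℝ) : ‖e x‖ = 1 := by
  unfold e
  rw [show (2 * Real.pi * Complex.I * x : ℂ) = ((2 * Real.pi * x : ℝ) : ℂ) * Complex.I by
    push_cast; ring]
  exact Complex.norm_exp_ofReal_mul_I _

lemma norm_S_le (F : Finset ℕ) (α : ℝ) : ‖∑ n ∈ F, e ((n : ℝ) * α)‖ ≤ F.card := by
  calc ‖∑ n ∈ F, e ((n : ℝ) * α)‖ ≤ ∑ n ∈ F, ‖e ((n : ℝ) * α)‖ := norm_sum_le _ _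
  _ = F.card := by simp only [norm_e, Finset.sum_const, nsmul_eq_mul, mul_one]

lemma orth (n m : ℕ) :
    (∫ α in (0:ℝ)..1, e ((n:ℝ)*α) * (starRingEnd ℂ) (e ((m:ℝ)*α)))
      = if n = m then 1 else 0 := by
  have key : ∀ α : ℝ, e ((n:ℝ)*α) * (starRingEnd ℂ) (e ((m:ℝ)*α))
      = Complex.exp ((2 * Real.pi * Complex.I * ((n:ℝ) - (m:ℝ))) * α) := by
    intro α
    unfold e
    rw [← Complex.exp_conj, ← Complex.exp_add]
    congr 1
    simp only [map_mul, Complex.conj_I, Complex.conj_ofReal, map_ofNat]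
    push_cast
    ring
  simp only [key]
  by_cases h : n = m
  · subst h
    simp
  · have hc : (2 * Real.pi * Complex.I * ((n:ℝ) - (m:ℝ)) : ℂ) ≠ 0 := by
      have : ((n:ℝ) : ℂ) - ((m:ℝ) : ℂ) ≠ 0 := by
        simp only [sub_ne_zero]
        exact_mod_cast fun hh => h (by exact_mod_cast hh)
      push_cast
      simp [Complex.ext_iff, Real.pi_ne_zero, Complex.I_ne_zero, this, mul_ne_zero,
        two_ne_zero]
      intro hcon
      exact absurd (by push_cast; ring_nf; exact_mod_cast hcon) this
    rw [if_neg h]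
    have := integral_exp_mul_complex (a := (0:ℝ)) (b := 1) hc
    rw [this]
    have hexp : Complex.exp (2 * Real.pi * Complex.I * ((n:ℝ) - (m:ℝ)) * (1:ℝ)) = 1 := by
      have := Complex.exp_int_mul_two_pi_mul_I ((n:ℤ) - (m:ℤ))
      rw [← this]
      congr 1
      push_cast
      ring
    rw [hexp]
    simp

lemma parseval (F : Finset ℕ) :
    ∫ α in Set.Ioc (0:ℝ) 1, ‖∑ n ∈ F, e ((n:ℝ) * α)‖ ^ (2:ℝ) = F.card := by
  have contS : Continuous fun α : ℝ => ∑ n ∈ F, e ((n : ℝ) * α) :=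
    continuous_finset_sum _ fun n _ => cont_e n
  have h1 : ∀ α : ℝ, ‖∑ n ∈ F, e ((n:ℝ) * α)‖ ^ (2:ℝ)
      = ((∑ n ∈ F, e ((n:ℝ) * α)) * (starRingEnd ℂ) (∑ n ∈ F, e ((n:ℝ) * α))).re := by
    intro α
    rw [Complex.mul_conj]
    rw [Complex.ofReal_re]
    rw [show (2:ℝ) = ((2:ℕ):ℝ) by norm_num, Real.rpow_natCast,
      Complex.sq_norm]
  simp only [h1]
  have hint : IntegrableOn (fun α : ℝ =>
      (∑ n ∈ F, e ((n:ℝ) * α)) * (starRingEnd ℂ) (∑ n ∈ F, e ((n:ℝ) * α)))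
      (Set.Ioc (0:ℝ) 1) volume := by
    apply Continuous.integrableOn_Ioc
    exact contS.mul (Complex.continuous_conj.comp contS)
  have hre := integral_re (μ := volume.restrict (Set.Ioc (0:ℝ) 1)) hint
  simp only [RCLike.re_to_complex] at hre
  rw [hre]
  have : (∫ α in Set.Ioc (0:ℝ) 1,
      (∑ n ∈ F, e ((n:ℝ) * α)) * (starRingEnd ℂ) (∑ n ∈ F, e ((n:ℝ) * α)))
      = (F.card : ℂ) := by
    rw [← intervalIntegral.integral_of_le (zero_le_one)]
    have expand : ∀ α : ℝ, (∑ n ∈ F, e ((n:ℝ) * α)) * (starRingEnd ℂ) (∑ n ∈ F, e ((n:ℝ) * α))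
        = ∑ n ∈ F, ∑ m ∈ F, e ((n:ℝ) * α) * (starRingEnd ℂ) (e ((m:ℝ) * α)) := by
      intro α
      rw [map_sum, Finset.sum_mul_sum]
    simp only [expand]
    rw [intervalIntegral.integral_finset_sum]
    · have : ∀ n ∈ F, (∫ α in (0:ℝ)..1, ∑ m ∈ F, e ((n:ℝ) * α) * (starRingEnd ℂ) (e ((m:ℝ) * α)))
          = 1 := by
        intro n hn
        rw [intervalIntegral.integral_finset_sum]
        · rw [Finset.sum_congr rfl fun m _ => orth n m]
          simp [Finset.sum_ite_eq, hn]
        · intro m _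
          exact ((cont_e n).mul (Complex.continuous_conj.comp (cont_e m))).intervalIntegrable 0 1
      rw [Finset.sum_congr rfl this]
      simp
    · intro n _
      exact (continuous_finset_sum _ fun m _ =>
        (cont_e n).mul (Complex.continuous_conj.comp (cont_e m))).intervalIntegrable 0 1
  rw [this]
  simp

lemma Ip_le_card (F : Finset ℕ) {p : ℝ} (hp1 : 1 < p) (hp2 : p < 2) :
    (∫ α in (0:ℝ)..1, ‖∑ n ∈ F, e ((n:ℝ) * α)‖ ^ p) ≤ (F.card : ℝ) ^ (p/2) := by
  have hp0 : (0:ℝ) < p := lt_trans zero_lt_one hp1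
  have h2p : (0:ℝ) < 2 - p := by linarith
  have contS : Continuous fun α : ℝ => ∑ n ∈ F, e ((n : ℝ) * α) :=
    continuous_finset_sum _ fun n _ => cont_e n
  set μ := volume.restrict (Set.Ioc (0:ℝ) 1) with hμ
  haveI hprob : IsProbabilityMeasure μ := by
    constructor
    rw [hμ, Measure.restrict_apply_univ, Real.volume_Ioc]
    norm_num
  rw [intervalIntegral.integral_of_le zero_le_one]
  have hpq : (2/p).HolderConjugate (2/(2-p)) := by
    rw [Real.holderConjugate_iff]
    constructor
    · rw [lt_div_iff₀ hp0]; linarith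
    · field_simp; ring
  set f : ℝ → ℝ := fun α => ‖∑ n ∈ F, e ((n:ℝ) * α)‖ ^ p with hf
  have contf : Continuous f := by
    apply contS.norm.rpow_const
    intro x; right; exact hp0.le
  have hfm : MemLp f (ENNReal.ofReal (2/p)) μ := by
    apply MemLp.of_bound contf.aestronglyMeasurable ((F.card : ℝ) ^ p)
    filter_upwards with α
    rw [Real.norm_of_nonneg (Real.rpow_nonneg (norm_nonneg _) p)]
    exact Real.rpow_le_rpow (norm_nonneg _) (norm_S_le F α) hp0.le
  have hgm : MemLp (fun _ : ℝ => (1:ℝ)) (ENNReal.ofReal (2/(2-p))) μ := memLp_const 1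
  have H := integral_mul_le_Lp_mul_Lq_of_nonneg hpq
    (Filter.Eventually.of_forall fun α => Real.rpow_nonneg (norm_nonneg _) p)
    (Filter.Eventually.of_forall fun _ => zero_le_one) hfm hgm
  simp only [mul_one] at H
  have h1 : (∫ α, (fun _ : ℝ => (1:ℝ)) α ^ (2/(2-p)) ∂μ) = 1 := by
    simp [Real.one_rpow]
  have h2 : (∫ α, f α ^ (2/p) ∂μ) = (F.card : ℝ) := by
    have : ∀ α : ℝ, f α ^ (2/p) = ‖∑ n ∈ F, e ((n:ℝ) * α)‖ ^ (2:ℝ) := by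
      intro α
      rw [hf]
      rw [← Real.rpow_mul (norm_nonneg _)]
      congr 1
      field_simp
    simp only [this]
    exact parseval F
  rw [h1, h2] at H
  rw [Real.one_rpow, mul_one, one_div_div] at H
  exact H

lemma AN_split (A SB SC : Set ℕ) (hB : SB ⊆ A) (hC : SC ⊆ Aᶜ) (N : ℝ) (α : ℝ) :
    ∑ n ∈ AN ((A \ SB) ∪ SC) N, e ((n:ℝ)*α)
      = ∑ n ∈ AN A N, e ((n:ℝ)*α) - ∑ n ∈ AN SB N, e ((n:ℝ)*α)
          + ∑ n ∈ AN SC N, e ((n:ℝ)*α) := by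
  have hset : AN ((A \ SB) ∪ SC) N = (AN A N \ AN SB N) ∪ AN SC N := by
    ext n
    simp only [AN, Finset.mem_filter, Finset.mem_union, Finset.mem_sdiff, Set.mem_union,
      Set.mem_diff]
    tauto
  have hdisj : Disjoint (AN A N \ AN SB N) (AN SC N) := by
    rw [Finset.disjoint_right]
    intro n hn hn2
    have hnA : n ∈ A := by
      have h := (Finset.mem_sdiff.mp hn2).1
      simp only [AN, Finset.mem_filter] at h
      exact h.2
    exact hC (by simp only [AN, Finset.mem_filter] at hn; exact hn.2) hnA
  have hsub : AN SB N ⊆ AN A N := by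
    intro n hn
    simp only [AN, Finset.mem_filter] at hn ⊢
    exact ⟨hn.1, hB hn.2⟩
  rw [hset, Finset.sum_union hdisj, Finset.sum_sdiff_eq_sub hsub]

lemma tri3 (x y z : ℂ) {p : ℝ} (hp : 0 ≤ p) :
    ‖x - y + z‖ ^ p ≤ 3 ^ p * (‖x‖ ^ p + ‖y‖ ^ p + ‖z‖ ^ p) := by
  set a := ‖x‖; set b := ‖y‖; set c := ‖z‖
  have ha : 0 ≤ a := norm_nonneg _
  have hb : 0 ≤ b := norm_nonneg _
  have hc : 0 ≤ c := norm_nonneg _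
  set m := max a (max b c) with hm
  have h1 : ‖x - y + z‖ ≤ a + b + c := by
    calc ‖x - y + z‖ ≤ ‖x - y‖ + ‖z‖ := norm_add_le _ _
    _ ≤ a + b + c := by have := norm_sub_le x y; unfold a b c; linarith
  have hma : a ≤ m := le_max_left _ _
  have hmb : b ≤ m := (le_max_left b c).trans (le_max_right _ _)
  have hmc : c ≤ m := (le_max_right b c).trans (le_max_right _ _)
  have h2 : a + b + c ≤ 3 * m := by linarith
  have hmn : 0 ≤ m := le_trans ha (le_max_left _ _)
  have step1 : ‖x - y + z‖ ^ p ≤ (3 * m) ^ p :=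
    Real.rpow_le_rpow (norm_nonneg _) (le_trans h1 h2) hp
  have step2 : (3 * m) ^ p = 3 ^ p * m ^ p := Real.mul_rpow (by norm_num) hmn
  have step3 : m ^ p ≤ a ^ p + b ^ p + c ^ p := by
    have hap : 0 ≤ a ^ p := Real.rpow_nonneg ha p
    have hbp : 0 ≤ b ^ p := Real.rpow_nonneg hb p
    have hcp : 0 ≤ c ^ p := Real.rpow_nonneg hc p
    rcases max_choice a (max b c) with h | h
    · rw [hm, h]; linarith
    · rcases max_choice b c with h' | h' <;> rw [hm, h, h'] <;> linarith
  calc ‖x - y + z‖ ^ p ≤ (3 * m) ^ p := step1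
  _ = 3 ^ p * m ^ p := step2
  _ ≤ 3 ^ p * (a ^ p + b ^ p + c ^ p) :=
      mul_le_mul_of_nonneg_left step3 (Real.rpow_nonneg (by norm_num) p)

/-- Perturbations: removing a set `B ⊆ A` and adding a set `C ⊆ ℕ \ A`, whose
counting functions satisfy `B(N) + C(N) ≪ N^{2-2/p}`, preserves the bound
`I_p(N;·) ≪ N^{p-1}`. -/
theorem stmt_7 (A SB SC : Set ℕ) (p : ℝ) (hp1 : 1 < p) (hp2 : p < 2)
    (C₀ N₀ : ℝ) (hA : ∀ N : ℝ, N₀ ≤ N → Ip p A N ≤ C₀ * N ^ (p - 1))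
    (hB : SB ⊆ A) (hC : SC ⊆ Aᶜ)
    (K : ℝ)
    (hcnt : ∀ N : ℝ, 1 ≤ N →
      ((AN SB N).card : ℝ) + ((AN SC N).card : ℝ) ≤ K * N ^ (2 - 2 / p)) :
    ∃ C N₁ : ℝ, ∀ N : ℝ, N₁ ≤ N → Ip p ((A \ SB) ∪ SC) N ≤ C * N ^ (p - 1) := by
  have hp0 : (0:ℝ) < p := by linarith
  have hK0 : (0:ℝ) ≤ K := by
    have h := hcnt 1 le_rfl
    rw [Real.one_rpow] at h
    have h1 : (0:ℝ) ≤ ((AN SB 1).card : ℝ) + ((AN SC 1).card : ℝ) := by positivity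
    linarith
  refine ⟨3 ^ p * (C₀ + 2 * K ^ (p/2)), max N₀ 1, fun N hN => ?_⟩
  have hN1 : (1:ℝ) ≤ N := le_trans (le_max_right _ _) hN
  have hN0 : (0:ℝ) < N := lt_of_lt_of_le zero_lt_one hN1
  have hNN0 : N₀ ≤ N := le_trans (le_max_left _ _) hN
  have contp : ∀ D : Set ℕ, Continuous fun α : ℝ => ‖∑ n ∈ AN D N, e ((n:ℝ)*α)‖ ^ p := by
    intro D
    apply (continuous_finset_sum _ fun n _ => cont_e n).norm.rpow_const
    intro x; right; exact hp0.le
  have key : Ip p ((A \ SB) ∪ SC) N ≤ 3 ^ p * (Ip p A N + Ip p SB N + Ip p SC N) := by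
    have h1 : Ip p ((A \ SB) ∪ SC) N = ∫ α in (0:ℝ)..1,
        ‖(∑ n ∈ AN A N, e ((n:ℝ)*α)) - (∑ n ∈ AN SB N, e ((n:ℝ)*α))
          + (∑ n ∈ AN SC N, e ((n:ℝ)*α))‖ ^ p := by
      unfold Ip
      congr 1
      funext α
      rw [AN_split A SB SC hB hC N α]
    rw [h1]
    have contL : Continuous fun α : ℝ =>
        ‖(∑ n ∈ AN A N, e ((n:ℝ)*α)) - (∑ n ∈ AN SB N, e ((n:ℝ)*α))
          + (∑ n ∈ AN SC N, e ((n:ℝ)*α))‖ ^ p := by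
      apply Continuous.rpow_const
      · apply Continuous.norm
        exact ((continuous_finset_sum _ fun n _ => cont_e n).sub
          (continuous_finset_sum _ fun n _ => cont_e n)).add
          (continuous_finset_sum _ fun n _ => cont_e n)
      · intro x; right; exact hp0.le
    have contR : Continuous fun α : ℝ =>
        3 ^ p * (‖∑ n ∈ AN A N, e ((n:ℝ)*α)‖ ^ p + ‖∑ n ∈ AN SB N, e ((n:ℝ)*α)‖ ^ p
          + ‖∑ n ∈ AN SC N, e ((n:ℝ)*α)‖ ^ p) :=
      continuous_const.mul (((contp A).add (contp SB)).add (contp SC))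
    have hmono := intervalIntegral.integral_mono_on zero_le_one
      (contL.intervalIntegrable (μ := volume) 0 1) (contR.intervalIntegrable (μ := volume) 0 1)
      (fun α _ => tri3 _ _ _ hp0.le)
    refine le_trans hmono ?_
    rw [intervalIntegral.integral_const_mul]
    rw [intervalIntegral.integral_add (f := fun α => ‖∑ n ∈ AN A N, e ((n:ℝ)*α)‖ ^ p + ‖∑ n ∈ AN SB N, e ((n:ℝ)*α)‖ ^ p) (((contp A).add (contp SB)).intervalIntegrable 0 1)
      ((contp SC).intervalIntegrable 0 1)]
    rw [intervalIntegral.integral_add ((contp A).intervalIntegrable 0 1)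
      ((contp SB).intervalIntegrable 0 1)]
    unfold Ip
    exact le_rfl
  have hBbound : Ip p SB N ≤ K ^ (p/2) * N ^ (p - 1) := by
    have hc1 : ((AN SB N).card : ℝ) ≤ K * N ^ (2 - 2/p) :=
      le_trans (le_add_of_nonneg_right (by positivity)) (hcnt N hN1)
    calc Ip p SB N ≤ ((AN SB N).card : ℝ) ^ (p/2) := Ip_le_card _ hp1 hp2
    _ ≤ (K * N ^ (2 - 2/p)) ^ (p/2) :=
        Real.rpow_le_rpow (Nat.cast_nonneg _) hc1 (by positivity)
    _ = K ^ (p/2) * N ^ (p - 1) := by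
        rw [Real.mul_rpow hK0 (Real.rpow_nonneg hN0.le _), ← Real.rpow_mul hN0.le]
        congr 1
        field_simp
  have hCbound : Ip p SC N ≤ K ^ (p/2) * N ^ (p - 1) := by
    have hc1 : ((AN SC N).card : ℝ) ≤ K * N ^ (2 - 2/p) :=
      le_trans (le_add_of_nonneg_left (by positivity)) (hcnt N hN1)
    calc Ip p SC N ≤ ((AN SC N).card : ℝ) ^ (p/2) := Ip_le_card _ hp1 hp2
    _ ≤ (K * N ^ (2 - 2/p)) ^ (p/2) :=
        Real.rpow_le_rpow (Nat.cast_nonneg _) hc1 (by positivity)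
    _ = K ^ (p/2) * N ^ (p - 1) := by
        rw [Real.mul_rpow hK0 (Real.rpow_nonneg hN0.le _), ← Real.rpow_mul hN0.le]
        congr 1
        field_simp
  have hAbound : Ip p A N ≤ C₀ * N ^ (p - 1) := hA N hNN0
  have h3 : (0:ℝ) ≤ 3 ^ p := Real.rpow_nonneg (by norm_num) p
  calc Ip p ((A \ SB) ∪ SC) N ≤ 3 ^ p * (Ip p A N + Ip p SB N + Ip p SC N) := key
  _ ≤ 3 ^ p * (C₀ * N ^ (p-1) + K ^ (p/2) * N ^ (p-1) + K ^ (p/2) * N ^ (p-1)) :=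
      mul_le_mul_of_nonneg_left (by linarith) h3
  _ = 3 ^ p * (C₀ + 2 * K ^ (p/2)) * N ^ (p - 1) := by ring
end

section
/- Suppose $\mathscr{A} \subseteq \mathbb{N}$ satisfies $\int_0^1 |f_N(\alpha)|^p d\alpha \ll N^{p-1}$ for some $p \in (1,2)$, where $f_N(\alpha) = \sum_{n \in \mathscr{A} \cap [1,N]} e(n\alpha)$. Then for every natural number $q$ and all large $N$, one has the discrete moment bound $\frac{1}{q} \sum_{a=1}^q |f_N(a/q)|^p \ll N^{p-1} + N^p / q$. -/
open Complex Finset MeasureTheory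
open scoped Real Classical

namespace Stmt13

noncomputable def fF (A : Set ℕ) (m : ℕ) (x : ℝ) : ℂ := ∑ n ∈ AN A m, e (n * x)

noncomputable def fD (A : Set ℕ) (m : ℕ) (x : ℝ) : ℂ :=
  ∑ n ∈ AN A m, 2 * (Real.pi : ℂ) * Complex.I * ((n : ℝ) : ℂ) * e (n * x)

lemma e_eq (c t : ℝ) : e (c * t) = Complex.exp (2 * (Real.pi : ℂ) * Complex.I * c * t) := by
  unfold e; push_cast; ring_nf

lemma norm_e (x : ℝ) : ‖e x‖ = 1 := by
  rw [e, Complex.norm_exp]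
  simp [Complex.mul_re]

lemma hasDerivAt_e (c x : ℝ) :
    HasDerivAt (fun t : ℝ => e (c * t)) (2 * (Real.pi : ℂ) * Complex.I * c * e (c * x)) x := by
  have h : (fun t : ℝ => e (c * t)) =
      fun t : ℝ => Complex.exp (2 * (Real.pi : ℂ) * Complex.I * c * t) := funext fun t => e_eq c t
  rw [h, e_eq]
  have h0 : HasDerivAt (fun t : ℝ => ((t : ℂ))) 1 x := by
    simpa using (hasDerivAt_id x).ofReal_comp
  have h1 : HasDerivAt (fun t : ℝ => 2 * (Real.pi : ℂ) * Complex.I * c * t)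
      (2 * (Real.pi : ℂ) * Complex.I * c) x := by
    simpa using h0.const_mul (2 * (Real.pi : ℂ) * Complex.I * c)
  have := h1.cexp
  convert this using 1
  ring

lemma hasDerivAt_fF (A : Set ℕ) (m : ℕ) (x : ℝ) : HasDerivAt (fF A m) (fD A m x) x := by
  unfold fF fD
  exact HasDerivAt.fun_sum fun n _ => hasDerivAt_e (n : ℝ) x

lemma continuous_fF (A : Set ℕ) (m : ℕ) : Continuous (fF A m) := by
  unfold fF
  refine continuous_finset_sum _ fun n _ => ?_
  have h : (fun x : ℝ => e (n * x)) =
      fun x : ℝ => Complex.exp (2 * (Real.pi : ℂ) * Complex.I * n * x) := funext fun t => e_eq n t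
  rw [h]
  exact Complex.continuous_exp.comp (continuous_const.mul Complex.continuous_ofReal)

lemma continuous_fD (A : Set ℕ) (m : ℕ) : Continuous (fD A m) := by
  unfold fD
  refine continuous_finset_sum _ fun n _ => Continuous.mul continuous_const ?_
  have h : (fun x : ℝ => e (n * x)) =
      fun x : ℝ => Complex.exp (2 * (Real.pi : ℂ) * Complex.I * n * x) := funext fun t => e_eq n t
  rw [h]
  exact Complex.continuous_exp.comp (continuous_const.mul Complex.continuous_ofReal)

lemma e_add_nat (n : ℕ) (x : ℝ) : e (n * (x + 1)) = e (n * x) := by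
  have h1 : (n : ℝ) * (x + 1) = n * x + n := by ring
  rw [h1]
  unfold e
  have h2 : 2 * (Real.pi : ℂ) * Complex.I * (((n : ℝ) * x + n : ℝ) : ℂ) =
      2 * (Real.pi : ℂ) * Complex.I * ((n : ℝ) * x : ℝ) + ((n : ℤ) : ℂ) * (2 * (Real.pi : ℂ) * Complex.I) := by
    push_cast; ring
  rw [h2, Complex.exp_add, Complex.exp_int_mul_two_pi_mul_I, mul_one]

lemma fF_periodic (A : Set ℕ) (m : ℕ) : Function.Periodic (fF A m) 1 := by
  intro x; unfold fF; exact Finset.sum_congr rfl fun n _ => e_add_nat n x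

lemma fD_periodic (A : Set ℕ) (m : ℕ) : Function.Periodic (fD A m) 1 := by
  intro x; unfold fD
  exact Finset.sum_congr rfl fun n _ => by rw [e_add_nat n x]

lemma AN_nat (A : Set ℕ) (m : ℕ) : AN A (m : ℝ) = (Finset.Icc 1 m).filter (· ∈ A) := by
  unfold AN; rw [Nat.floor_natCast]

lemma norm_fF_le (A : Set ℕ) (m : ℕ) (x : ℝ) : ‖fF A m x‖ ≤ m := by
  refine le_trans (norm_sum_le _ _) ?_
  have h : ∀ n ∈ AN A (m:ℕ), ‖e (n * x)‖ = 1 := fun n _ => norm_e _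
  rw [Finset.sum_congr rfl h]
  simp only [Finset.sum_const, nsmul_eq_mul, mul_one]
  have h2 : (AN A (m:ℕ)).card ≤ (Finset.Icc 1 m).card := by
    rw [AN_nat]
    exact Finset.card_le_card (Finset.filter_subset _ _)
  have h3 : (Finset.Icc 1 m).card = m := by rw [Nat.card_Icc]; omega
  exact_mod_cast h2.trans_eq h3

lemma fD_eq (A : Set ℕ) (m : ℕ) (x : ℝ) :
    fD A m x = 2 * (Real.pi : ℂ) * Complex.I *
      ∑ j ∈ Finset.range m, (fF A m x - fF A j x) := by
  have hsub : ∀ j ∈ Finset.range m, fF A m x - fF A j x =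
      ∑ n ∈ AN A m, (if j < n then e (n * x) else 0) := by
    intro j hj
    rw [Finset.mem_range] at hj
    have hS : AN A (j : ℝ) = (AN A (m : ℝ)).filter (fun n => n ≤ j) := by
      rw [AN_nat, AN_nat]
      ext n
      simp only [Finset.mem_filter, Finset.mem_Icc]
      constructor
      · rintro ⟨⟨h1, h2⟩, h3⟩
        exact ⟨⟨⟨h1, h2.trans hj.le⟩, h3⟩, h2⟩
      · rintro ⟨⟨⟨h1, _⟩, h3⟩, h4⟩
        exact ⟨⟨h1, h4⟩, h3⟩
    unfold fF
    rw [hS, Finset.sum_filter, ← Finset.sum_sub_distrib]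
    refine Finset.sum_congr rfl fun n _ => ?_
    by_cases h : n ≤ j
    · simp [h, not_lt.mpr h]
    · simp [h, not_le.mp h]
  rw [Finset.sum_congr rfl hsub, Finset.sum_comm]
  unfold fD
  rw [Finset.mul_sum]
  refine Finset.sum_congr rfl fun n hn => ?_
  have hnm : n ≤ m := by
    have := (Finset.mem_filter.mp ((AN_nat A m) ▸ hn)).1
    exact (Finset.mem_Icc.mp this).2
  have hfilt : (Finset.range m).filter (fun j => j < n) = Finset.range n := by
    ext j
    simp only [Finset.mem_filter, Finset.mem_range]
    omega
  rw [← Finset.sum_filter, hfilt, Finset.sum_const, Finset.card_range, nsmul_eq_mul]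
  push_cast
  ring

lemma norm_fD_le (A : Set ℕ) (m : ℕ) (x : ℝ) :
    ‖fD A m x‖ ≤ 2 * Real.pi * ∑ j ∈ Finset.range m, (‖fF A m x‖ + ‖fF A j x‖) := by
  rw [fD_eq, norm_mul]
  have h1 : ‖2 * (Real.pi : ℂ) * Complex.I‖ = 2 * Real.pi := by
    simp [map_mul,
      _root_.abs_of_nonneg Real.pi_nonneg]
  rw [h1]
  refine mul_le_mul_of_nonneg_left ?_ (by positivity)
  refine le_trans (norm_sum_le _ _) (Finset.sum_le_sum fun j _ => norm_sub_le _ _)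

lemma rpow_add_le' {a b z : ℝ} (ha : 0 ≤ a) (hb : 0 ≤ b) (hz0 : 0 ≤ z) (hz1 : z ≤ 1) :
    (a + b) ^ z ≤ a ^ z + b ^ z := by
  have h := NNReal.rpow_add_le_add_rpow a.toNNReal b.toNNReal hz0 hz1
  have h2 : ((a.toNNReal + b.toNNReal : NNReal) : ℝ) = a + b := by
    simp [Real.coe_toNNReal a ha, Real.coe_toNNReal b hb]
  calc (a + b) ^ z = (((a.toNNReal + b.toNNReal : NNReal) : ℝ)) ^ z := by rw [h2]
    _ = (((a.toNNReal + b.toNNReal) ^ z : NNReal) : ℝ) := by rw [← NNReal.coe_rpow]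
    _ ≤ (((a.toNNReal ^ z + b.toNNReal ^ z : NNReal)) : ℝ) := by exact_mod_cast h
    _ = a ^ z + b ^ z := by
        rw [NNReal.coe_add, NNReal.coe_rpow, NNReal.coe_rpow,
          Real.coe_toNNReal a ha, Real.coe_toNNReal b hb]

lemma young_ineq {p : ℝ} (hp : 1 < p) {a b : ℝ} (ha : 0 ≤ a) (hb : 0 ≤ b) :
    a ^ (p - 1) * b ≤ (1 - 1 / p) * a ^ p + (1 / p) * b ^ p := by
  have hp0 : 0 < p := by linarith
  have h := Real.geom_mean_le_arith_mean2_weighted (w₁ := 1 - 1 / p) (w₂ := 1 / p)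
    (p₁ := a ^ p) (p₂ := b ^ p)
    (by rw [sub_nonneg]; rw [div_le_one hp0]; linarith) (by positivity)
    (Real.rpow_nonneg ha p) (Real.rpow_nonneg hb p) (by ring)
  have e1 : (a ^ p) ^ (1 - 1 / p) = a ^ (p - 1) := by
    rw [← Real.rpow_mul ha]
    congr 1
    field_simp
  have e2 : (b ^ p) ^ (1 / p) = b := by
    rw [← Real.rpow_mul hb]
    rw [mul_one_div, div_self hp0.ne', Real.rpow_one]
  rwa [e1, e2] at h

lemma rpow_sub_one_mul {p a : ℝ} (hp : 1 < p) (ha : 0 ≤ a) : a ^ (p - 1) * a = a ^ p := by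
  rcases eq_or_lt_of_le ha with h | h
  · rw [← h]
    rw [Real.zero_rpow (by linarith : p - 1 ≠ 0), Real.zero_rpow (by positivity : p ≠ 0), zero_mul]
  · nth_rewrite 2 [← Real.rpow_one a]
    rw [← Real.rpow_add h]
    norm_num


lemma norm_sq_rpow {x : ℝ} (hx : 0 ≤ x) (r : ℝ) : (x ^ (2:ℕ)) ^ r = x ^ (2 * r) := by
  rw [← Real.rpow_natCast x 2, ← Real.rpow_mul hx]
  norm_num

lemma key_ftc (A : Set ℕ) {p : ℝ} (hp1 : 1 < p) (hp2 : p < 2) (m : ℕ) {x y z w : ℝ}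
    (hz : z ∈ Set.Icc x y) (hw : w ∈ Set.Icc x y) :
    ‖fF A m w‖ ^ p ≤ ‖fF A m z‖ ^ p +
      ∫ t in x..y, p * (‖fF A m t‖ ^ (p - 1) * ‖fD A m t‖) := by
  set F := fF A m with hF_def
  set Fd := fD A m with hFd_def
  have hder : ∀ t, HasDerivAt F (Fd t) t := fun t => hasDerivAt_fF A m t
  have hcF : Continuous F := continuous_fF A m
  have hcFd : Continuous Fd := continuous_fD A m
  have hp0 : (0:ℝ) < p := by linarith
  have hGc : Continuous fun t => p * (‖F t‖ ^ (p-1) * ‖Fd t‖) :=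
    continuous_const.mul ((hcF.norm.rpow_const fun t => Or.inr (by linarith)).mul hcFd.norm)
  have hFdc : Continuous fun t => ‖Fd t‖ := hcFd.norm
  set K := ∫ t in x..y, p * (‖F t‖ ^ (p-1) * ‖Fd t‖) with hK
  set c2 := p * ∫ t in x..y, ‖Fd t‖ with hc2
  suffices hsuf : ∀ ε : ℝ, 0 < ε → ‖F w‖ ^ p ≤ (‖F z‖ + ε) ^ p + K + ε ^ (p-1) * c2 by
    have hcont : ContinuousAt (fun ε : ℝ => (‖F z‖ + ε) ^ p + K + ε ^ (p-1) * c2) 0 := by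
      have c1 : ContinuousAt (fun ε : ℝ => (‖F z‖ + ε) ^ p) 0 :=
        (continuousAt_const.add continuousAt_id).rpow_const (Or.inr hp0.le)
      have c3 : ContinuousAt (fun ε : ℝ => ε ^ (p-1)) 0 :=
        continuousAt_id.rpow_const (Or.inr (by linarith))
      exact (c1.add continuousAt_const).add (c3.mul continuousAt_const)
    have hlim := ge_of_tendsto (hcont.tendsto.mono_left nhdsWithin_le_nhds)
      ((eventually_mem_nhdsWithin (a := (0:ℝ)) (s := Set.Ioi 0)).mono fun ε hε => hsuf ε hε)
    have hval : (‖F z‖ + 0) ^ p + K + (0:ℝ) ^ (p-1) * c2 = ‖F z‖ ^ p + K := by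
      rw [add_zero, Real.zero_rpow (by intro h; linarith [h] : p - 1 ≠ 0), zero_mul, add_zero]
    rw [hval] at hlim
    exact hlim
  intro ε hε
  set u : ℝ → ℝ := fun t => Complex.normSq (F t) + ε ^ 2 with hu_def
  have hupos : ∀ t, 0 < u t := fun t =>
    add_pos_of_nonneg_of_pos (Complex.normSq_nonneg (F t)) (by positivity)
  have hcu : Continuous u := (Complex.continuous_normSq.comp hcF).add continuous_const
  set ud : ℝ → ℝ := fun t => 2 * (F t).re * (Fd t).re + 2 * (F t).im * (Fd t).im with hud_def
  have hud : ∀ t, HasDerivAt u (ud t) t := by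
    intro t
    have h1 : HasDerivAt (fun s => (F s).re) ((Fd t).re) t := by
      exact Complex.reCLM.hasFDerivAt.comp_hasDerivAt t (hder t)
    have h2 : HasDerivAt (fun s => (F s).im) ((Fd t).im) t := by
      exact Complex.imCLM.hasFDerivAt.comp_hasDerivAt t (hder t)
    have h3 := ((h1.mul h1).add (h2.mul h2)).add_const (ε ^ 2)
    have heq : u = fun s => (F s).re * (F s).re + (F s).im * (F s).im + ε ^ 2 := by
      funext s; simp [hu_def, Complex.normSq_apply]
    rw [heq]
    convert h3 using 1
    show 2 * (F t).re * (Fd t).re + 2 * (F t).im * (Fd t).im = _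
    ring
    all_goals rfl
  set φd : ℝ → ℝ := fun t => ud t * (p/2) * u t ^ (p/2 - 1) with hφd_def
  have hφ : ∀ t, HasDerivAt (fun s => u s ^ (p/2)) (φd t) t := fun t =>
    (hud t).rpow_const (Or.inl (hupos t).ne')
  have hcud : Continuous ud :=
    ((continuous_const.mul (Complex.continuous_re.comp hcF)).mul
      (Complex.continuous_re.comp hcFd)).add
    ((continuous_const.mul (Complex.continuous_im.comp hcF)).mul
      (Complex.continuous_im.comp hcFd))
  have hcφd : Continuous φd :=
    (hcud.mul continuous_const).mul (hcu.rpow_const fun t => Or.inl (hupos t).ne')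
  set Bo : ℝ → ℝ := fun t => p * (‖F t‖ ^ (p-1) * ‖Fd t‖) + ε ^ (p-1) * (p * ‖Fd t‖) with hBo_def
  have hcBo : Continuous Bo := hGc.add (continuous_const.mul (continuous_const.mul hFdc))
  have hBo_nonneg : ∀ t, 0 ≤ Bo t := by
    intro t
    have e1 := Real.rpow_nonneg (norm_nonneg (F t)) (p-1)
    have e2 := Real.rpow_nonneg hε.le (p-1)
    have e3 := norm_nonneg (Fd t)
    simp only [hBo_def]
    positivity
  have hFsq : ∀ t, Complex.normSq (F t) = ‖F t‖ ^ (2:ℕ) := by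
    intro t; rw [← Complex.sq_norm]
  have hbound : ∀ t, |φd t| ≤ Bo t := by
    intro t
    have h1 : |ud t| ≤ 2 * (‖F t‖ * ‖Fd t‖) := by
      have he : ud t = 2 * ((starRingEnd ℂ) (F t) * Fd t).re := by
        simp only [hud_def, Complex.mul_re, Complex.conj_re, Complex.conj_im]
        ring
      rw [he, abs_mul]
      have h2 : |((starRingEnd ℂ) (F t) * Fd t).re| ≤ ‖(starRingEnd ℂ) (F t) * Fd t‖ := by
        exact Complex.abs_re_le_norm _
      have h3 : ‖(starRingEnd ℂ) (F t) * Fd t‖ = ‖F t‖ * ‖Fd t‖ := by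
        rw [norm_mul,
          Complex.norm_conj]
      calc |(2:ℝ)| * |((starRingEnd ℂ) (F t) * Fd t).re| = 2 * |((starRingEnd ℂ) (F t) * Fd t).re| := by
            norm_num
        _ ≤ 2 * (‖F t‖ * ‖Fd t‖) := by
            rw [← h3]; exact mul_le_mul_of_nonneg_left h2 (by norm_num)
    have hune : ‖F t‖ ≤ u t ^ (1/2 : ℝ) := by
      have h0 : ‖F t‖ = Complex.normSq (F t) ^ (1/2 : ℝ) := by
        rw [Complex.norm_def, Real.sqrt_eq_rpow]
      rw [h0]
      refine Real.rpow_le_rpow (Complex.normSq_nonneg _) ?_ (by norm_num)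
      simp only [hu_def]
      nlinarith [sq_nonneg ε]
    have hmul : u t ^ (1/2:ℝ) * u t ^ (p/2 - 1) = u t ^ ((p-1)/2) := by
      rw [← Real.rpow_add (hupos t)]
      congr 1
      ring
    have hub : u t ^ ((p-1)/2) ≤ ‖F t‖ ^ (p-1) + ε ^ (p-1) := by
      have h4 : u t ≤ (‖F t‖ + ε) ^ (2:ℕ) := by
        simp only [hu_def, hFsq t]
        nlinarith [norm_nonneg (F t), hε.le]
      calc u t ^ ((p-1)/2) ≤ ((‖F t‖ + ε) ^ (2:ℕ)) ^ ((p-1)/2) :=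
            Real.rpow_le_rpow (hupos t).le h4 (by linarith)
        _ = (‖F t‖ + ε) ^ (p-1) := by
            rw [norm_sq_rpow (by positivity)]
            congr 1
            ring
        _ ≤ ‖F t‖ ^ (p-1) + ε ^ (p-1) :=
            rpow_add_le' (norm_nonneg _) hε.le (by linarith) (by linarith)
    calc |φd t| = |ud t| * (p/2) * u t ^ (p/2 - 1) := by
          simp only [hφd_def]
          rw [abs_mul, abs_mul, abs_of_pos (by positivity : (0:ℝ) < p/2),
            abs_of_pos (Real.rpow_pos_of_pos (hupos t) _)]
      _ ≤ (2 * (‖F t‖ * ‖Fd t‖)) * (p/2) * u t ^ (p/2 - 1) := by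
          refine mul_le_mul_of_nonneg_right (mul_le_mul_of_nonneg_right h1 (by positivity))
            (Real.rpow_nonneg (hupos t).le _)
      _ = (p * ‖Fd t‖) * (‖F t‖ * u t ^ (p/2 - 1)) := by ring
      _ ≤ (p * ‖Fd t‖) * (u t ^ (1/2:ℝ) * u t ^ (p/2 - 1)) := by
          refine mul_le_mul_of_nonneg_left
            (mul_le_mul_of_nonneg_right hune (Real.rpow_nonneg (hupos t).le _)) (by positivity)
      _ = (p * ‖Fd t‖) * u t ^ ((p-1)/2) := by rw [hmul]
      _ ≤ (p * ‖Fd t‖) * (‖F t‖ ^ (p-1) + ε ^ (p-1)) := by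
          refine mul_le_mul_of_nonneg_left hub (by positivity)
      _ = Bo t := by simp only [hBo_def]; ring
  have hftc : ∫ t in z..w, φd t = u w ^ (p/2) - u z ^ (p/2) :=
    intervalIntegral.integral_eq_sub_of_hasDerivAt (fun t _ => hφ t)
      (hcφd.intervalIntegrable z w)
  have hBi : IntervalIntegrable Bo volume x y := hcBo.intervalIntegrable x y
  have hae : (0:ℝ → ℝ) ≤ᶠ[ae (volume.restrict (Set.Ioc x y))] Bo :=
    Filter.Eventually.of_forall hBo_nonneg
  have hdiff : u w ^ (p/2) - u z ^ (p/2) ≤ ∫ t in x..y, Bo t := by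
    rcases le_total z w with h | h
    · calc u w ^ (p/2) - u z ^ (p/2) = ∫ t in z..w, φd t := hftc.symm
        _ ≤ ∫ t in z..w, Bo t :=
            intervalIntegral.integral_mono_on h (hcφd.intervalIntegrable _ _)
              (hcBo.intervalIntegrable _ _) (fun t _ => (le_abs_self _).trans (hbound t))
        _ ≤ ∫ t in x..y, Bo t :=
            intervalIntegral.integral_mono_interval hz.1 h hw.2 hae hBi
    · calc u w ^ (p/2) - u z ^ (p/2) = ∫ t in w..z, -φd t := by
            rw [intervalIntegral.integral_neg, intervalIntegral.integral_symm z w, hftc, neg_neg]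
        _ ≤ ∫ t in w..z, Bo t :=
            intervalIntegral.integral_mono_on h (hcφd.neg.intervalIntegrable _ _)
              (hcBo.intervalIntegrable _ _) (fun t _ => (neg_le_abs _).trans (hbound t))
        _ ≤ ∫ t in x..y, Bo t :=
            intervalIntegral.integral_mono_interval hw.1 h hz.2 hae hBi
  have h6 : ∫ t in x..y, ε ^ (p-1) * (p * ‖Fd t‖) = ε ^ (p-1) * c2 := by
    rw [intervalIntegral.integral_const_mul, intervalIntegral.integral_const_mul, hc2]
  have hBo_int : ∫ t in x..y, Bo t = K + ε ^ (p-1) * c2 := by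
    simp only [hBo_def]
    rw [intervalIntegral.integral_add (g := fun t => ε ^ (p-1) * (p * ‖Fd t‖)) (hGc.intervalIntegrable _ _)
      ((continuous_const.mul (continuous_const.mul hFdc)).intervalIntegrable _ _), h6, ← hK]
  have hw1 : ‖F w‖ ^ p ≤ u w ^ (p/2) := by
    have h5 : (‖F w‖ ^ (2:ℕ)) ^ (p/2) = ‖F w‖ ^ p := by
      rw [norm_sq_rpow (norm_nonneg _)]
      congr 1
      ring
    rw [← h5]
    refine Real.rpow_le_rpow (by positivity) ?_ (by positivity)
    simp only [hu_def, hFsq w]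
    nlinarith [sq_nonneg ε]
  have hz1 : u z ^ (p/2) ≤ (‖F z‖ + ε) ^ p := by
    have h4 : u z ≤ (‖F z‖ + ε) ^ (2:ℕ) := by
      simp only [hu_def, hFsq z]
      nlinarith [norm_nonneg (F z), hε.le]
    calc u z ^ (p/2) ≤ ((‖F z‖ + ε) ^ (2:ℕ)) ^ (p/2) :=
          Real.rpow_le_rpow (hupos z).le h4 (by positivity)
      _ = (‖F z‖ + ε) ^ p := by
          rw [norm_sq_rpow (by positivity)]
          congr 1
          ring
  rw [hBo_int] at hdiff
  linarith [hw1, hz1, hdiff]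

end Stmt13


set_option maxHeartbeats 1600000 in
/-- Discrete moments of strongly subconvex `L^p`-sets:
`q⁻¹ ∑_{a=1}^q |f_N(a/q)|^p ≪ N^{p-1} + N^p/q`. -/
theorem stmt_13 (A : Set ℕ) (p : ℝ) (hp1 : 1 < p) (hp2 : p < 2) (C₀ N₀ : ℝ)
    (hA : ∀ N : ℝ, N₀ ≤ N → Ip p A N ≤ C₀ * N ^ (p - 1)) :
    ∃ C N₁ : ℝ, ∀ q : ℕ, 0 < q → ∀ N : ℝ, N₁ ≤ N →
      (q : ℝ)⁻¹ * ∑ a ∈ Finset.Icc 1 q, ‖∑ n ∈ AN A N, e (n * (a / q))‖ ^ p ≤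
        C * (N ^ (p - 1) + N ^ p / q) := by
  classical
  set B := max N₀ 1 with hBdef
  set C₁ := max C₀ 0 + B with hC₁def
  have hB1 : (1:ℝ) ≤ B := le_max_right _ _
  have hC₁0 : (0:ℝ) < C₁ := by
    have : (0:ℝ) ≤ max C₀ 0 := le_max_right _ _
    linarith
  have hC₁B' : B ≤ C₁ := by
    have : (0:ℝ) ≤ max C₀ 0 := le_max_right _ _
    linarith
  have hp0 : (0:ℝ) < p := by linarith
  have hp10 : (0:ℝ) < p - 1 := by linarith
  refine ⟨C₁ * (1 + 4 * Real.pi * p), 1, ?_⟩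
  intro q hq N hN
  have hq0 : (0:ℝ) < q := by exact_mod_cast hq
  have hN0 : (0:ℝ) < N := by linarith
  set M := ⌊N⌋₊ with hM
  have hMN : (M:ℝ) ≤ N := Nat.floor_le hN0.le
  -- continuity helpers
  have hcF : Continuous (Stmt13.fF A M) := Stmt13.continuous_fF A M
  have hcFn : Continuous fun t => ‖Stmt13.fF A M t‖ := hcF.norm
  have hcp : Continuous fun t => ‖Stmt13.fF A M t‖ ^ p :=
    hcFn.rpow_const fun t => Or.inr hp0.le
  have hcr : Continuous fun t => ‖Stmt13.fF A M t‖ ^ (p-1) :=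
    hcFn.rpow_const fun t => Or.inr hp10.le
  -- the L^p bound at every integer scale
  have hJ : ∀ m : ℕ, (∫ t in (0:ℝ)..1, ‖Stmt13.fF A m t‖ ^ p) ≤ C₁ * (m:ℝ) ^ (p-1) := by
    intro m
    have hcm : Continuous fun t => ‖Stmt13.fF A m t‖ ^ p :=
      (Stmt13.continuous_fF A m).norm.rpow_const fun t => Or.inr hp0.le
    by_cases hm0 : m = 0
    · subst hm0
      have hz : ∀ t ∈ Set.uIcc (0:ℝ) 1, ‖Stmt13.fF A 0 t‖ ^ p = (0:ℝ) := by
        intro t _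
        have hempty : AN A ((0:ℝ)) = (∅ : Finset ℕ) := by
          refine Finset.eq_empty_of_forall_notMem fun n hn => ?_
          rw [AN, Finset.mem_filter, Finset.mem_Icc, Nat.floor_zero] at hn
          omega
        have h0 : Stmt13.fF A 0 t = 0 := by
          simp [Stmt13.fF, hempty]
        rw [h0, norm_zero, Real.zero_rpow hp0.ne']
      rw [intervalIntegral.integral_congr hz]
      simp [Real.zero_rpow (show p - 1 ≠ 0 by linarith)]
    · by_cases hcase : N₀ ≤ (m:ℝ)
      · have h := hA m hcase
        have hIp : Ip p A (m:ℝ) = ∫ t in (0:ℝ)..1, ‖Stmt13.fF A m t‖ ^ p := rfl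
        rw [hIp] at h
        refine h.trans (mul_le_mul_of_nonneg_right ?_ (Real.rpow_nonneg (Nat.cast_nonneg m) _))
        have h1 : C₀ ≤ max C₀ 0 := le_max_left _ _
        linarith
      · push_neg at hcase
        have hstep : (∫ t in (0:ℝ)..1, ‖Stmt13.fF A m t‖ ^ p) ≤ ∫ t in (0:ℝ)..1, ((m:ℝ)) ^ p := by
          refine intervalIntegral.integral_mono_on zero_le_one (hcm.intervalIntegrable _ _)
            intervalIntegrable_const fun t _ =>
            Real.rpow_le_rpow (norm_nonneg _) (Stmt13.norm_fF_le A m t) hp0.le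
        rw [intervalIntegral.integral_const, smul_eq_mul, sub_zero, one_mul] at hstep
        have hmp : (m:ℝ) ^ p = (m:ℝ) ^ (p-1) * (m:ℝ) :=
          (Stmt13.rpow_sub_one_mul hp1 (Nat.cast_nonneg m)).symm
        have hmB : (m:ℝ) ≤ B := hcase.le.trans (le_max_left _ _)
        have hrn : (0:ℝ) ≤ (m:ℝ) ^ (p-1) := Real.rpow_nonneg (Nat.cast_nonneg m) _
        calc (∫ t in (0:ℝ)..1, ‖Stmt13.fF A m t‖ ^ p) ≤ (m:ℝ) ^ p := hstep
          _ = (m:ℝ) ^ (p-1) * (m:ℝ) := hmp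
          _ ≤ (m:ℝ) ^ (p-1) * C₁ := mul_le_mul_of_nonneg_left (hmB.trans hC₁B') hrn
          _ = C₁ * (m:ℝ) ^ (p-1) := mul_comm _ _
  have hMr : ∀ j : ℕ, j ≤ M → ((j:ℝ)) ^ (p-1) ≤ ((M:ℝ)) ^ (p-1) := fun j hj =>
    Real.rpow_le_rpow (Nat.cast_nonneg j) (by exact_mod_cast hj) hp10.le
  -- Hoelder-type mixed bounds
  have hH : ∀ j : ℕ, j ≤ M →
      (∫ t in (0:ℝ)..1, ‖Stmt13.fF A M t‖ ^ (p-1) * ‖Stmt13.fF A j t‖) ≤ C₁ * (M:ℝ) ^ (p-1) := by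
    intro j hj
    have hcj := (Stmt13.continuous_fF A j).norm
    have hcpj : Continuous fun t => ‖Stmt13.fF A j t‖ ^ p :=
      hcj.rpow_const fun t => Or.inr hp0.le
    have hc1 : Continuous fun t => ‖Stmt13.fF A M t‖ ^ (p-1) * ‖Stmt13.fF A j t‖ := hcr.mul hcj
    have step1 : (∫ t in (0:ℝ)..1, ‖Stmt13.fF A M t‖ ^ (p-1) * ‖Stmt13.fF A j t‖) ≤
        ∫ t in (0:ℝ)..1, ((1 - 1/p) * ‖Stmt13.fF A M t‖ ^ p + (1/p) * ‖Stmt13.fF A j t‖ ^ p) := by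
      refine intervalIntegral.integral_mono_on zero_le_one (hc1.intervalIntegrable _ _)
        (((continuous_const.mul hcp).add (continuous_const.mul hcpj)).intervalIntegrable _ _)
        fun t _ => Stmt13.young_ineq hp1 (norm_nonneg _) (norm_nonneg _)
    rw [intervalIntegral.integral_add (f := fun t => (1 - 1/p) * ‖Stmt13.fF A M t‖ ^ p)
      (g := fun t => (1/p) * ‖Stmt13.fF A j t‖ ^ p) ((continuous_const.mul hcp).intervalIntegrable _ _)
      ((continuous_const.mul hcpj).intervalIntegrable _ _),
      intervalIntegral.integral_const_mul, intervalIntegral.integral_const_mul] at step1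
    have b1 := hJ M
    have b2 : (∫ t in (0:ℝ)..1, ‖Stmt13.fF A j t‖ ^ p) ≤ C₁ * (M:ℝ) ^ (p-1) :=
      (hJ j).trans (mul_le_mul_of_nonneg_left (hMr j hj) hC₁0.le)
    have w1 : (0:ℝ) ≤ 1 - 1/p := by
      rw [sub_nonneg, div_le_one hp0]; linarith
    have w2 : (0:ℝ) ≤ 1/p := by positivity
    calc (∫ t in (0:ℝ)..1, ‖Stmt13.fF A M t‖ ^ (p-1) * ‖Stmt13.fF A j t‖) ≤
        (1 - 1/p) * (∫ t in (0:ℝ)..1, ‖Stmt13.fF A M t‖ ^ p) +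
          (1/p) * (∫ t in (0:ℝ)..1, ‖Stmt13.fF A j t‖ ^ p) := step1
      _ ≤ (1 - 1/p) * (C₁ * (M:ℝ) ^ (p-1)) + (1/p) * (C₁ * (M:ℝ) ^ (p-1)) :=
          add_le_add (mul_le_mul_of_nonneg_left b1 w1) (mul_le_mul_of_nonneg_left b2 w2)
      _ = C₁ * (M:ℝ) ^ (p-1) := by field_simp; ring
  have hself : (∫ t in (0:ℝ)..1, ‖Stmt13.fF A M t‖ ^ (p-1) * ‖Stmt13.fF A M t‖) =
      ∫ t in (0:ℝ)..1, ‖Stmt13.fF A M t‖ ^ p :=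
    intervalIntegral.integral_congr fun t _ => Stmt13.rpow_sub_one_mul hp1 (norm_nonneg _)
  -- the mixed derivative integral
  have hKmix : (∫ t in (0:ℝ)..1, ‖Stmt13.fF A M t‖ ^ (p-1) * ‖Stmt13.fD A M t‖) ≤
      4 * Real.pi * C₁ * ((M:ℝ) * (M:ℝ) ^ (p-1)) := by
    have hterm : ∀ j : ℕ, Continuous fun t => ‖Stmt13.fF A M t‖ ^ (p-1) * ‖Stmt13.fF A M t‖ +
        ‖Stmt13.fF A M t‖ ^ (p-1) * ‖Stmt13.fF A j t‖ := fun j =>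
      (hcr.mul hcFn).add (hcr.mul (Stmt13.continuous_fF A j).norm)
    have hcg : Continuous fun t => 2 * Real.pi * ∑ j ∈ Finset.range M,
        (‖Stmt13.fF A M t‖ ^ (p-1) * ‖Stmt13.fF A M t‖ +
          ‖Stmt13.fF A M t‖ ^ (p-1) * ‖Stmt13.fF A j t‖) :=
      continuous_const.mul (continuous_finset_sum _ fun j _ => hterm j)
    have hc0 : Continuous fun t => ‖Stmt13.fF A M t‖ ^ (p-1) * ‖Stmt13.fD A M t‖ :=
      hcr.mul (Stmt13.continuous_fD A M).norm
    have step1 : (∫ t in (0:ℝ)..1, ‖Stmt13.fF A M t‖ ^ (p-1) * ‖Stmt13.fD A M t‖) ≤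
        ∫ t in (0:ℝ)..1, 2 * Real.pi * ∑ j ∈ Finset.range M,
          (‖Stmt13.fF A M t‖ ^ (p-1) * ‖Stmt13.fF A M t‖ +
            ‖Stmt13.fF A M t‖ ^ (p-1) * ‖Stmt13.fF A j t‖) := by
      refine intervalIntegral.integral_mono_on zero_le_one (hc0.intervalIntegrable _ _)
        (hcg.intervalIntegrable _ _) fun t _ => ?_
      have h1 := Stmt13.norm_fD_le A M t
      have h2 : ‖Stmt13.fF A M t‖ ^ (p-1) * ‖Stmt13.fD A M t‖ ≤
          ‖Stmt13.fF A M t‖ ^ (p-1) * (2 * Real.pi * ∑ j ∈ Finset.range M,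
            (‖Stmt13.fF A M t‖ + ‖Stmt13.fF A j t‖)) :=
        mul_le_mul_of_nonneg_left h1 (Real.rpow_nonneg (norm_nonneg _) _)
      refine h2.trans (le_of_eq ?_)
      calc ‖Stmt13.fF A M t‖ ^ (p-1) * (2 * Real.pi * ∑ j ∈ Finset.range M,
            (‖Stmt13.fF A M t‖ + ‖Stmt13.fF A j t‖)) =
          2 * Real.pi * (‖Stmt13.fF A M t‖ ^ (p-1) * ∑ j ∈ Finset.range M,
            (‖Stmt13.fF A M t‖ + ‖Stmt13.fF A j t‖)) := by ring
        _ = 2 * Real.pi * ∑ j ∈ Finset.range M, ‖Stmt13.fF A M t‖ ^ (p-1) *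
            (‖Stmt13.fF A M t‖ + ‖Stmt13.fF A j t‖) := by rw [Finset.mul_sum]
        _ = 2 * Real.pi * ∑ j ∈ Finset.range M,
            (‖Stmt13.fF A M t‖ ^ (p-1) * ‖Stmt13.fF A M t‖ +
              ‖Stmt13.fF A M t‖ ^ (p-1) * ‖Stmt13.fF A j t‖) := by
            rw [Finset.sum_congr rfl fun j _ => mul_add _ _ _]
    have step2 : (∫ t in (0:ℝ)..1, 2 * Real.pi * ∑ j ∈ Finset.range M,
        (‖Stmt13.fF A M t‖ ^ (p-1) * ‖Stmt13.fF A M t‖ +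
          ‖Stmt13.fF A M t‖ ^ (p-1) * ‖Stmt13.fF A j t‖)) =
        2 * Real.pi * ∑ j ∈ Finset.range M,
          ((∫ t in (0:ℝ)..1, ‖Stmt13.fF A M t‖ ^ (p-1) * ‖Stmt13.fF A M t‖) +
            ∫ t in (0:ℝ)..1, ‖Stmt13.fF A M t‖ ^ (p-1) * ‖Stmt13.fF A j t‖) := by
      rw [intervalIntegral.integral_const_mul,
        intervalIntegral.integral_finset_sum fun j _ => (hterm j).intervalIntegrable _ _]
      congr 1
      refine Finset.sum_congr rfl fun j _ => ?_
      exact intervalIntegral.integral_add ((hcr.mul hcFn).intervalIntegrable _ _)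
        ((hcr.mul (Stmt13.continuous_fF A j).norm).intervalIntegrable _ _)
    have step3 : ∑ j ∈ Finset.range M,
        ((∫ t in (0:ℝ)..1, ‖Stmt13.fF A M t‖ ^ (p-1) * ‖Stmt13.fF A M t‖) +
          ∫ t in (0:ℝ)..1, ‖Stmt13.fF A M t‖ ^ (p-1) * ‖Stmt13.fF A j t‖) ≤
        (M:ℝ) * (2 * (C₁ * (M:ℝ) ^ (p-1))) := by
      refine le_trans (Finset.sum_le_sum (g := fun _ : ℕ => 2 * (C₁ * (M:ℝ) ^ (p-1)))
        fun j hj => ?_) ?_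
      · have ha : (∫ t in (0:ℝ)..1, ‖Stmt13.fF A M t‖ ^ (p-1) * ‖Stmt13.fF A M t‖) ≤
            C₁ * (M:ℝ) ^ (p-1) := by rw [hself]; exact hJ M
        have hb := hH j (Finset.mem_range.mp hj).le
        show _ ≤ 2 * (C₁ * (M:ℝ) ^ (p - 1))
        linarith
      · rw [Finset.sum_const, Finset.card_range, nsmul_eq_mul]
    calc (∫ t in (0:ℝ)..1, ‖Stmt13.fF A M t‖ ^ (p-1) * ‖Stmt13.fD A M t‖) ≤
        2 * Real.pi * ((M:ℝ) * (2 * (C₁ * (M:ℝ) ^ (p-1)))) := by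
          refine step1.trans ?_
          rw [step2]
          exact mul_le_mul_of_nonneg_left step3 (by positivity)
      _ = 4 * Real.pi * C₁ * ((M:ℝ) * (M:ℝ) ^ (p-1)) := by ring
  -- Gallagher step
  have hcG : Continuous fun t => p * (‖Stmt13.fF A M t‖ ^ (p-1) * ‖Stmt13.fD A M t‖) :=
    continuous_const.mul (hcr.mul (Stmt13.continuous_fD A M).norm)
  have hGnn : ∀ t, 0 ≤ p * (‖Stmt13.fF A M t‖ ^ (p-1) * ‖Stmt13.fD A M t‖) := fun t =>
    mul_nonneg hp0.le (mul_nonneg (Real.rpow_nonneg (norm_nonneg _) _) (norm_nonneg _))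
  set c : ℕ → ℝ := fun k => (2*(k:ℝ)+1)/(2*(q:ℝ)) with hcdef
  have hck : ∀ k : ℕ, c (k+1) - c k = 1/(q:ℝ) := by
    intro k
    simp only [hcdef]
    push_cast
    rw [div_sub_div_same]
    have h2 : 2*((k:ℝ)+1)+1 - (2*(k:ℝ)+1) = 2 := by ring
    rw [h2, div_eq_div_iff (by positivity) (by positivity)]
    ring
  have hle : ∀ k : ℕ, c k ≤ c (k+1) := by
    intro k
    have := hck k
    have hq1 : (0:ℝ) < 1/(q:ℝ) := by positivity
    linarith
  have Pf : Function.Periodic (fun t => ‖Stmt13.fF A M t‖ ^ p) 1 := by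
    intro t
    simp only [Stmt13.fF_periodic A M t]
  have PG : Function.Periodic
      (fun t => p * (‖Stmt13.fF A M t‖ ^ (p-1) * ‖Stmt13.fD A M t‖)) 1 := by
    intro t
    simp only [Stmt13.fF_periodic A M t, Stmt13.fD_periodic A M t]
  have hkey : ∀ k : ℕ, k < q →
      (1/(q:ℝ)) * ‖Stmt13.fF A M (((k:ℝ)+1)/(q:ℝ))‖ ^ p ≤
        (∫ t in (c k)..(c (k+1)), ‖Stmt13.fF A M t‖ ^ p) +
          (1/(q:ℝ)) * ∫ t in (c k)..(c (k+1)),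
            p * (‖Stmt13.fF A M t‖ ^ (p-1) * ‖Stmt13.fD A M t‖) := by
    intro k hk
    have hlen := hck k
    have hlek := hle k
    have hmem : ((k:ℝ)+1)/(q:ℝ) ∈ Set.Icc (c k) (c (k+1)) := by
      constructor
      · simp only [hcdef]
        rw [div_le_div_iff₀ (by positivity) (by positivity)]
        push_cast
        nlinarith [hq0]
      · simp only [hcdef]
        rw [div_le_div_iff₀ (by positivity) (by positivity)]
        push_cast
        nlinarith [hq0]
    have hpt : ∀ z ∈ Set.Icc (c k) (c (k+1)),
        ‖Stmt13.fF A M (((k:ℝ)+1)/(q:ℝ))‖ ^ p ≤ ‖Stmt13.fF A M z‖ ^ p +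
          ∫ t in (c k)..(c (k+1)), p * (‖Stmt13.fF A M t‖ ^ (p-1) * ‖Stmt13.fD A M t‖) :=
      fun z hzm => Stmt13.key_ftc A hp1 hp2 M hzm hmem
    have hint1 : (∫ _z in (c k)..(c (k+1)), ‖Stmt13.fF A M (((k:ℝ)+1)/(q:ℝ))‖ ^ p) ≤
        ∫ z in (c k)..(c (k+1)), (‖Stmt13.fF A M z‖ ^ p +
          ∫ t in (c k)..(c (k+1)), p * (‖Stmt13.fF A M t‖ ^ (p-1) * ‖Stmt13.fD A M t‖)) :=
      intervalIntegral.integral_mono_on hlek intervalIntegrable_const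
        ((hcp.add continuous_const).intervalIntegrable _ _) hpt
    rw [intervalIntegral.integral_const,
      intervalIntegral.integral_add (hcp.intervalIntegrable _ _) intervalIntegrable_const,
      intervalIntegral.integral_const, hlen, smul_eq_mul, smul_eq_mul] at hint1
    linarith
  -- summing over the intervals
  have hsum1 : ∑ k ∈ Finset.range q, ∫ t in (c k)..(c (k+1)), ‖Stmt13.fF A M t‖ ^ p =
      ∫ t in (c 0)..(c q), ‖Stmt13.fF A M t‖ ^ p :=
    intervalIntegral.sum_integral_adjacent_intervals fun k _ => hcp.intervalIntegrable _ _
  have hsum2 : ∑ k ∈ Finset.range q, ∫ t in (c k)..(c (k+1)),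
        p * (‖Stmt13.fF A M t‖ ^ (p-1) * ‖Stmt13.fD A M t‖) =
      ∫ t in (c 0)..(c q), p * (‖Stmt13.fF A M t‖ ^ (p-1) * ‖Stmt13.fD A M t‖) :=
    intervalIntegral.sum_integral_adjacent_intervals fun k _ => hcG.intervalIntegrable _ _
  have hcq : c q = c 0 + 1 := by
    simp only [hcdef]
    push_cast
    field_simp
    ring
  have hper1 : (∫ t in (c 0)..(c q), ‖Stmt13.fF A M t‖ ^ p) =
      ∫ t in (0:ℝ)..1, ‖Stmt13.fF A M t‖ ^ p := by
    rw [hcq, Pf.intervalIntegral_add_eq (c 0) 0, zero_add]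
  have hper2 : (∫ t in (c 0)..(c q), p * (‖Stmt13.fF A M t‖ ^ (p-1) * ‖Stmt13.fD A M t‖)) =
      ∫ t in (0:ℝ)..1, p * (‖Stmt13.fF A M t‖ ^ (p-1) * ‖Stmt13.fD A M t‖) := by
    rw [hcq, PG.intervalIntegral_add_eq (c 0) 0, zero_add]
  -- rewrite the LHS
  have hANM : AN A N = AN A ((M:ℕ) : ℝ) := by
    simp only [Stmt13.AN_nat, hM, AN, Nat.floor_natCast]
  have hLHS : (q : ℝ)⁻¹ * ∑ a ∈ Finset.Icc 1 q, ‖∑ n ∈ AN A N, e (n * (a / q))‖ ^ p =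
      ∑ k ∈ Finset.range q, (1/(q:ℝ)) * ‖Stmt13.fF A M (((k:ℝ)+1)/(q:ℝ))‖ ^ p := by
    rw [Finset.mul_sum]
    refine Finset.sum_bij' (fun a _ => a - 1) (fun k _ => k + 1) ?_ ?_ ?_ ?_ ?_
    · intro a ha
      rw [Finset.mem_Icc] at ha
      show a - 1 ∈ Finset.range q
      rw [Finset.mem_range]
      omega
    · intro k hk
      rw [Finset.mem_range] at hk
      show k + 1 ∈ Finset.Icc 1 q
      rw [Finset.mem_Icc]
      omega
    · intro a ha
      rw [Finset.mem_Icc] at ha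
      show a - 1 + 1 = a
      omega
    · intro k _
      show k + 1 - 1 = k
      omega
    · intro a ha
      rw [Finset.mem_Icc] at ha
      show _ = (1/(q:ℝ)) * ‖Stmt13.fF A M ((((a - 1 : ℕ):ℝ)+1)/(q:ℝ))‖ ^ p
      have hcast : ((a - 1 : ℕ) : ℝ) + 1 = (a:ℝ) := by
        rw [Nat.cast_sub ha.1]
        push_cast
        ring
      rw [hcast, one_div]
      congr 2
      simp only [Stmt13.fF]
      rw [hANM]
  -- put everything together
  have hmain : (q : ℝ)⁻¹ * ∑ a ∈ Finset.Icc 1 q, ‖∑ n ∈ AN A N, e (n * (a / q))‖ ^ p ≤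
      C₁ * (M:ℝ) ^ (p-1) +
        (1/(q:ℝ)) * (p * (4 * Real.pi * C₁ * ((M:ℝ) * (M:ℝ) ^ (p-1)))) := by
    rw [hLHS]
    calc ∑ k ∈ Finset.range q, (1/(q:ℝ)) * ‖Stmt13.fF A M (((k:ℝ)+1)/(q:ℝ))‖ ^ p ≤
        ∑ k ∈ Finset.range q, ((∫ t in (c k)..(c (k+1)), ‖Stmt13.fF A M t‖ ^ p) +
          (1/(q:ℝ)) * ∫ t in (c k)..(c (k+1)),
            p * (‖Stmt13.fF A M t‖ ^ (p-1) * ‖Stmt13.fD A M t‖)) :=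
          Finset.sum_le_sum fun k hk => hkey k (Finset.mem_range.mp hk)
      _ = (∑ k ∈ Finset.range q, ∫ t in (c k)..(c (k+1)), ‖Stmt13.fF A M t‖ ^ p) +
          (1/(q:ℝ)) * ∑ k ∈ Finset.range q, ∫ t in (c k)..(c (k+1)),
            p * (‖Stmt13.fF A M t‖ ^ (p-1) * ‖Stmt13.fD A M t‖) := by
          rw [Finset.sum_add_distrib, Finset.mul_sum]
      _ = (∫ t in (0:ℝ)..1, ‖Stmt13.fF A M t‖ ^ p) +
          (1/(q:ℝ)) * ∫ t in (0:ℝ)..1,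
            p * (‖Stmt13.fF A M t‖ ^ (p-1) * ‖Stmt13.fD A M t‖) := by
          rw [hsum1, hper1, hsum2, hper2]
      _ ≤ C₁ * (M:ℝ) ^ (p-1) +
          (1/(q:ℝ)) * (p * (4 * Real.pi * C₁ * ((M:ℝ) * (M:ℝ) ^ (p-1)))) := by
          refine add_le_add (hJ M) (mul_le_mul_of_nonneg_left ?_ (by positivity))
          rw [intervalIntegral.integral_const_mul]
          exact mul_le_mul_of_nonneg_left hKmix hp0.le
  -- final arithmetic
  have h1 : (M:ℝ) ^ (p-1) ≤ N ^ (p-1) :=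
    Real.rpow_le_rpow (Nat.cast_nonneg M) hMN hp10.le
  have h2 : (M:ℝ) * (M:ℝ) ^ (p-1) ≤ N ^ p := by
    calc (M:ℝ) * (M:ℝ) ^ (p-1) ≤ N * N ^ (p-1) :=
        mul_le_mul hMN h1 (Real.rpow_nonneg (Nat.cast_nonneg M) _) hN0.le
      _ = N ^ p := by
          rw [mul_comm]
          exact Stmt13.rpow_sub_one_mul hp1 hN0.le
  have e1 : C₁ * (M:ℝ) ^ (p-1) ≤ C₁ * N ^ (p-1) := mul_le_mul_of_nonneg_left h1 hC₁0.le
  have e2 : (1/(q:ℝ)) * (p * (4 * Real.pi * C₁ * ((M:ℝ) * (M:ℝ) ^ (p-1)))) ≤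
      (1/(q:ℝ)) * (p * (4 * Real.pi * C₁ * N ^ p)) := by
    refine mul_le_mul_of_nonneg_left (mul_le_mul_of_nonneg_left
      (mul_le_mul_of_nonneg_left h2 ?_) hp0.le) (by positivity)
    have := Real.pi_pos
    positivity
  have e3 : (1/(q:ℝ)) * (p * (4 * Real.pi * C₁ * N ^ p)) =
      (4 * Real.pi * p * C₁) * (N ^ p / (q:ℝ)) := by
    field_simp
  have e4 : (0:ℝ) ≤ (4 * Real.pi * p * C₁) * N ^ (p-1) := by
    refine mul_nonneg ?_ (Real.rpow_nonneg hN0.le _)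
    have := Real.pi_pos
    positivity
  have e5 : (0:ℝ) ≤ C₁ * (N ^ p / (q:ℝ)) :=
    mul_nonneg hC₁0.le (div_nonneg (Real.rpow_nonneg hN0.le _) hq0.le)
  have efin : C₁ * N ^ (p-1) + (4 * Real.pi * p * C₁) * (N ^ p / (q:ℝ)) ≤
      C₁ * (1 + 4 * Real.pi * p) * (N ^ (p-1) + N ^ p / (q:ℝ)) := by
    nlinarith [e4, e5]
  calc (q : ℝ)⁻¹ * ∑ a ∈ Finset.Icc 1 q, ‖∑ n ∈ AN A N, e (n * (a / q))‖ ^ p ≤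
      C₁ * (M:ℝ) ^ (p-1) +
        (1/(q:ℝ)) * (p * (4 * Real.pi * C₁ * ((M:ℝ) * (M:ℝ) ^ (p-1)))) := hmain
    _ ≤ C₁ * N ^ (p-1) + (4 * Real.pi * p * C₁) * (N ^ p / (q:ℝ)) := by
        rw [← e3]
        exact add_le_add e1 e2
    _ ≤ C₁ * (1 + 4 * Real.pi * p) * (N ^ (p-1) + N ^ p / (q:ℝ)) := efin
end

section
/- Let $q \ge 2$ and let $\chi$ be a primitive Dirichlet character modulo $q$, with Gauss-type sums $T(a) = \sum_{m=1}^q \chi(m) e(ma/q)$ satisfying $|T(a)| \le \sqrt{q}$ for all $a$. Let $p \in (1,2)$ and suppose $\mathscr{A} \subseteq \mathbb{N}$ satisfies the discrete moment bound $\frac{1}{q}\sum_{a=1}^q |f_N(a/q)|^p \ll N^{p-1}(1 + N/q)$ where $f_N(\alpha) = \sum_{n \in \mathscr{A}\cap[1,N]} e(n\alpha)$. Then $\sum_{n \in \mathscr{A}\cap[1,N]} \chi(n) \ll q^{1/2} N^{1-1/p} (1 + N/q)^{1/p}$. -/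
open Complex Finset MeasureTheory
open scoped Real Classical

lemma e_add (x y : ℝ) : e (x + y) = e x * e y := by
  unfold e; rw [← Complex.exp_add]; push_cast; ring_nf

lemma conj_e (x : ℝ) : (starRingEnd ℂ) (e x) = e (-x) := by
  unfold e
  have h : (starRingEnd ℂ) (2 * Real.pi * Complex.I * x) =
      2 * Real.pi * Complex.I * ((-x : ℝ) : ℂ) := by
    simp only [map_mul, Complex.conj_I, Complex.conj_ofReal, map_ofNat]
    push_cast
    ring
  rw [← Complex.exp_conj, h]

lemma e_int (t : ℤ) : e (t : ℝ) = 1 := by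
  unfold e
  rw [show (2 * Real.pi * Complex.I * ((t:ℝ):ℂ)) = (t:ℂ) * (2 * Real.pi * Complex.I) by push_cast; ring]
  exact Complex.exp_int_mul_two_pi_mul_I t

lemma e_nat_pow (x : ℝ) (a : ℕ) : e x ^ a = e (a * x) := by
  unfold e
  rw [← Complex.exp_nat_mul]
  congr 1
  push_cast
  ring

lemma rootsum (q : ℕ) (hq : 0 < q) (k : ℤ) :
    ∑ a ∈ Finset.Icc 1 q, e ((k * a) / q) = if ((k : ZMod q) = 0) then (q:ℂ) else 0 := by
  by_cases hdvd : ((k : ZMod q) = 0)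
  · obtain ⟨t, ht⟩ := (ZMod.intCast_zmod_eq_zero_iff_dvd k q).mp hdvd
    rw [if_pos hdvd]
    have h1 : ∀ a ∈ Finset.Icc 1 q, e (((k:ℝ) * a) / q) = 1 := by
      intro a _
      have hq' : (q:ℝ) ≠ 0 := by positivity
      have : ((k:ℝ) * a) / q = ((t * a : ℤ) : ℝ) := by
        subst ht; push_cast; field_simp
      rw [this, e_int]
    rw [Finset.sum_congr rfl h1, Finset.sum_const, Nat.card_Icc]
    simp
  · rw [if_neg hdvd]
    set x : ℂ := e ((k:ℝ)/q) with hx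
    have hterm : ∀ a : ℕ, e (((k:ℝ) * a) / q) = x ^ a := by
      intro a
      rw [hx, e_nat_pow]
      congr 1
      ring
    have hq' : (q:ℂ) ≠ 0 := by exact_mod_cast hq.ne'
    have hxq : x ^ q = 1 := by
      rw [hx, e_nat_pow]
      have : (q:ℝ) * ((k:ℝ)/q) = ((k:ℤ):ℝ) := by field_simp
      rw [this, e_int]
    have hx1 : x ≠ 1 := by
      intro h
      apply hdvd
      rw [hx] at h
      unfold e at h
      obtain ⟨t, htt⟩ := Complex.exp_eq_one_iff.mp h
      push_cast at htt
      have h2πI : (2 * (Real.pi:ℂ) * Complex.I) ≠ 0 := by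
        simp [Real.pi_ne_zero, Complex.I_ne_zero]
      have h3 : ((k:ℂ)/q - t) = 0 := by
        apply mul_left_cancel₀ h2πI
        rw [mul_zero, mul_sub, htt]
        ring
      have h4 : (k:ℂ) = t * q := by
        have h3' : (k:ℂ)/q = t := sub_eq_zero.mp h3
        rw [div_eq_iff hq'] at h3'
        exact h3'
      have h5 : k = t * q := by exact_mod_cast h4
      rw [ZMod.intCast_zmod_eq_zero_iff_dvd]
      exact ⟨t, by rw [h5]; ring⟩
    calc ∑ a ∈ Finset.Icc 1 q, e (((k:ℝ) * a) / q) = ∑ a ∈ Finset.Icc 1 q, x ^ a := by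
          exact Finset.sum_congr rfl fun a _ => hterm a
      _ = ∑ i ∈ Finset.range q, x ^ (1 + i) := by
          rw [← Finset.Ico_add_one_right_eq_Icc, Finset.sum_Ico_eq_sum_range]
          simp
      _ = x * ∑ i ∈ Finset.range q, x ^ i := by
          rw [Finset.mul_sum]
          exact Finset.sum_congr rfl fun i _ => by rw [pow_add, pow_one]
      _ = 0 := by rw [geom_sum_eq hx1, hxq]; simp

lemma unique_rep (q : ℕ) (hq : 0 < q) (n : ℕ) (c : ℂ) :
    ∑ m ∈ Finset.Icc 1 q, (if ((m : ZMod q) = (n : ZMod q)) then c else 0) = c := by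
  haveI : NeZero q := ⟨hq.ne'⟩
  set m₀ := if n % q = 0 then q else n % q with hm₀
  have hmem : m₀ ∈ Finset.Icc 1 q := by
    rw [Finset.mem_Icc, hm₀]
    split_ifs with h
    · omega
    · have := Nat.mod_lt n hq
      omega
  rw [Finset.sum_eq_single m₀]
  · rw [if_pos]
    rw [hm₀]
    split_ifs with h
    · rw [ZMod.natCast_self]
      conv_rhs => rw [← Nat.mod_add_div n q]
      push_cast [h, ZMod.natCast_self]
      simp
    · conv_rhs => rw [← Nat.mod_add_div n q]
      push_cast [ZMod.natCast_self]
      simp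
  · intro m hm hne
    rw [if_neg]
    intro heq
    apply hne
    have hmod : m % q = n % q := (ZMod.natCast_eq_natCast_iff m n q).mp heq
    rw [Finset.mem_Icc] at hm
    rw [hm₀]
    split_ifs with h
    · have : q ∣ m := Nat.dvd_of_mod_eq_zero (by rw [hmod, h])
      exact Nat.le_antisymm hm.2 (Nat.le_of_dvd (by omega) this)
    · have hmq : m < q := by
        rcases lt_or_eq_of_le hm.2 with h' | h'
        · exact h'
        · exfalso; apply h; rw [← hmod, h', Nat.mod_self]
      rw [← hmod, Nat.mod_eq_of_lt hmq]
  · intro h; exact absurd hmem h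

/-- Character sums over strongly subconvex `L^p`-sets:
`∑_{n ∈ A(N)} χ(n) ≪ q^{1/2} N^{1-1/p} (1 + N/q)^{1/p}`. -/
theorem stmt_15 (p : ℝ) (hp1 : 1 < p) (hp2 : p < 2) (C₀ : ℝ) :
    ∃ C : ℝ, ∀ (q : ℕ), 2 ≤ q → ∀ χ : DirichletCharacter ℂ q, χ.IsPrimitive →
      (∀ a : ℕ, ‖∑ m ∈ Finset.Icc 1 q, χ m * e (m * a / q)‖ ≤ Real.sqrt q) →
      ∀ (A : Set ℕ) (N : ℝ), 1 ≤ N →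
        ((q : ℝ)⁻¹ * ∑ a ∈ Finset.Icc 1 q, ‖∑ n ∈ AN A N, e (n * (a / q))‖ ^ p ≤
          C₀ * N ^ (p - 1) * (1 + N / q)) →
        ‖∑ n ∈ AN A N, χ n‖ ≤
          C * (q : ℝ) ^ ((1:ℝ)/2) * N ^ (1 - 1/p) * (1 + N / q) ^ (1/p) := by
  refine ⟨(max C₀ 0) ^ (1/p), ?_⟩
  intro q hq2 χ _hprim hT A N hN hmom
  have hq0 : 0 < q := by omega
  have hq0' : (0:ℝ) < q := by exact_mod_cast hq0
  have hN0 : (0:ℝ) < N := by linarith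
  have hp0 : (0:ℝ) < p := by linarith
  have hB0 : (0:ℝ) < 1 + N / q := by positivity
  have hNp : (0:ℝ) < N ^ (p - 1) := Real.rpow_pos_of_pos hN0 _
  -- C₀ is nonnegative
  have hC₀ : 0 ≤ C₀ := by
    have hL : (0:ℝ) ≤ (q : ℝ)⁻¹ * ∑ a ∈ Finset.Icc 1 q, ‖∑ n ∈ AN A N, e (n * (a / q))‖ ^ p := by
      positivity
    nlinarith [le_trans hL hmom, mul_pos hNp hB0]
  -- the key orthogonality identity
  have key : (q:ℂ) * ∑ n ∈ AN A N, χ n =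
      ∑ a ∈ Finset.Icc 1 q, (∑ m ∈ Finset.Icc 1 q, χ m * e (m * a / q)) *
        (starRingEnd ℂ) (∑ n ∈ AN A N, e (n * (a / q))) := by
    symm
    calc ∑ a ∈ Finset.Icc 1 q, (∑ m ∈ Finset.Icc 1 q, χ m * e (m * a / q)) *
            (starRingEnd ℂ) (∑ n ∈ AN A N, e (n * (a / q)))
        = ∑ a ∈ Finset.Icc 1 q, ∑ m ∈ Finset.Icc 1 q, ∑ n ∈ AN A N,
            χ m * e (((((m:ℤ) - n : ℤ)):ℝ) * a / q) := by
          refine Finset.sum_congr rfl fun a _ => ?_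
          rw [map_sum, Finset.sum_mul_sum]
          refine Finset.sum_congr rfl fun m _ => Finset.sum_congr rfl fun n _ => ?_
          rw [conj_e, mul_assoc, ← e_add]
          congr 2
          push_cast
          ring
      _ = ∑ m ∈ Finset.Icc 1 q, ∑ n ∈ AN A N,
            χ m * ∑ a ∈ Finset.Icc 1 q, e (((((m:ℤ) - n : ℤ)):ℝ) * a / q) := by
          rw [Finset.sum_comm]
          refine Finset.sum_congr rfl fun m _ => ?_
          rw [Finset.sum_comm]
          exact Finset.sum_congr rfl fun n _ => (Finset.mul_sum _ _ _).symm
      _ = ∑ m ∈ Finset.Icc 1 q, ∑ n ∈ AN A N,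
            (if ((m : ZMod q) = (n : ZMod q)) then (q:ℂ) * χ m else 0) := by
          refine Finset.sum_congr rfl fun m _ => Finset.sum_congr rfl fun n _ => ?_
          rw [rootsum q hq0 ((m:ℤ) - n)]
          have hcond : ((((m:ℤ) - n : ℤ)) : ZMod q) = 0 ↔ ((m : ZMod q) = (n : ZMod q)) := by
            push_cast
            exact sub_eq_zero
          rw [mul_ite, mul_zero, if_congr hcond rfl rfl, mul_comm]
      _ = ∑ n ∈ AN A N, (q:ℂ) * χ n := by
          rw [Finset.sum_comm]
          refine Finset.sum_congr rfl fun n _ => ?_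
          have h1 : ∀ m ∈ Finset.Icc 1 q,
              (if ((m : ZMod q) = (n : ZMod q)) then (q:ℂ) * χ m else 0) =
              (if ((m : ZMod q) = (n : ZMod q)) then (q:ℂ) * χ n else 0) := by
            intro m _
            split_ifs with h
            · rw [h]
            · rfl
          rw [Finset.sum_congr rfl h1, unique_rep q hq0 n ((q:ℂ) * χ n)]
      _ = (q:ℂ) * ∑ n ∈ AN A N, χ n := (Finset.mul_sum _ _ _).symm
  -- norms
  have h1 : (q:ℝ) * ‖∑ n ∈ AN A N, χ n‖ ≤
      Real.sqrt q * ∑ a ∈ Finset.Icc 1 q, ‖∑ n ∈ AN A N, e (n * (a / q))‖ := by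
    calc (q:ℝ) * ‖∑ n ∈ AN A N, χ n‖ = ‖(q:ℂ) * ∑ n ∈ AN A N, χ n‖ := by
          rw [norm_mul, Complex.norm_natCast]
      _ = ‖∑ a ∈ Finset.Icc 1 q, (∑ m ∈ Finset.Icc 1 q, χ m * e (m * a / q)) *
            (starRingEnd ℂ) (∑ n ∈ AN A N, e (n * (a / q)))‖ := by rw [key]
      _ ≤ ∑ a ∈ Finset.Icc 1 q, ‖(∑ m ∈ Finset.Icc 1 q, χ m * e (m * a / q)) *
            (starRingEnd ℂ) (∑ n ∈ AN A N, e (n * (a / q)))‖ := norm_sum_le _ _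
      _ ≤ ∑ a ∈ Finset.Icc 1 q, Real.sqrt q * ‖∑ n ∈ AN A N, e (n * (a / q))‖ := by
          refine Finset.sum_le_sum fun a _ => ?_
          rw [norm_mul, RCLike.norm_conj]
          exact mul_le_mul_of_nonneg_right (hT a) (norm_nonneg _)
      _ = Real.sqrt q * ∑ a ∈ Finset.Icc 1 q, ‖∑ n ∈ AN A N, e (n * (a / q))‖ :=
          (Finset.mul_sum _ _ _).symm
  -- power mean inequality
  set X := (q:ℝ)⁻¹ * ∑ a ∈ Finset.Icc 1 q, ‖∑ n ∈ AN A N, e (n * (a / q))‖ with hX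
  have hX0 : 0 ≤ X := by positivity
  have hpm := Real.rpow_arith_mean_le_arith_mean_rpow (Finset.Icc 1 q)
    (fun _ => (q:ℝ)⁻¹) (fun a => ‖∑ n ∈ AN A N, e (n * (a / q))‖)
    (fun i _ => by positivity) (by
      rw [Finset.sum_const, Nat.card_Icc]
      simp
      field_simp) (fun i _ => norm_nonneg _) hp1.le
  have hXp : X ^ p ≤ C₀ * N ^ (p - 1) * (1 + N / q) := by
    have hpm' : X ^ p ≤
        (q:ℝ)⁻¹ * ∑ a ∈ Finset.Icc 1 q, ‖∑ n ∈ AN A N, e (n * (a / q))‖ ^ p := by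
      rw [hX, Finset.mul_sum, Finset.mul_sum]
      exact hpm
    exact le_trans hpm' hmom
  have hXle : X ≤ (C₀ * N ^ (p - 1) * (1 + N / q)) ^ (1/p) := by
    have hXeq : X = (X ^ p) ^ (1/p) := by
      rw [← Real.rpow_mul hX0, mul_one_div, div_self hp0.ne', Real.rpow_one]
    rw [hXeq]
    exact Real.rpow_le_rpow (by positivity) hXp (by positivity)
  calc ‖∑ n ∈ AN A N, χ n‖ = (q:ℝ)⁻¹ * ((q:ℝ) * ‖∑ n ∈ AN A N, χ n‖) := by
        field_simp
    _ ≤ (q:ℝ)⁻¹ * (Real.sqrt q * ∑ a ∈ Finset.Icc 1 q, ‖∑ n ∈ AN A N, e (n * (a / q))‖) :=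
        mul_le_mul_of_nonneg_left h1 (by positivity)
    _ = Real.sqrt q * X := by rw [hX]; ring
    _ ≤ Real.sqrt q * (C₀ * N ^ (p - 1) * (1 + N / q)) ^ (1/p) :=
        mul_le_mul_of_nonneg_left hXle (Real.sqrt_nonneg _)
    _ = (max C₀ 0) ^ (1/p) * (q : ℝ) ^ ((1:ℝ)/2) * N ^ (1 - 1/p) * (1 + N / q) ^ (1/p) := by
        rw [max_eq_left hC₀, Real.sqrt_eq_rpow]
        rw [Real.mul_rpow (by positivity) hB0.le, Real.mul_rpow hC₀ hNp.le]
        rw [← Real.rpow_mul hN0.le]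
        have : (p - 1) * (1/p) = 1 - 1/p := by field_simp
        rw [this]
        ring
end
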